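/- Let F₁, F₂, F₃, F₄ be the Tanner sheaves on X associated with four families of local codes {C_{1,σ}}, {C_{2,σ}}, {C_{3,σ}}, {C_{4,σ}} (σ ∈ X(t−1)), and let ℓ₁ + ℓ₂ + ℓ₃ + ℓ₄ = t. Assume that for every σ ∈ X(t−1) and all cᵢ ∈ C_{i,σ} (i = 1,2,3,4): Σ_{τ ∈ X_{≥σ}(t)} c₁(τ)·c₂(τ)·c₃(τ)·c₄(τ) = 0. Fix a cocycle ζ₄ ∈ ker δ^{ℓ₄}(X,F₄) and define f_{ζ₄}(α₁,α₂,α₃) = Σ_{τ ∈ X(t)} (((α₁∪α₂)∪α₃)∪ζ₄)(τ)(τ). Then for all cocycles ζᵢ ∈ ker δ^{ℓᵢ}(X,Fᵢ) and all coboundaries bᵢ ∈ im δ^{ℓᵢ−1}(X,Fᵢ) (i = 1,2,3): f_{ζ₄}(ζ₁+b₁, ζ₂+b₂, ζ₃+b₃) = f_{ζ₄}(ζ₁, ζ₂, ζ₃). -/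

import Mathlib

set_option linter.unusedSectionVars false

namespace SheafCup

variable {V : Type*} [Fintype V] [LinearOrder V]
variable {K : Type*} [Field K]

/-- `X_{≥σ}(t)`: the `t`-simplices (i.e. those with `t+1` vertices) of `X` containing `σ`. -/
abbrev Up (X : Set (Finset V)) [DecidablePred (· ∈ X)] (σ : Finset V) (t : ℕ) : Type _ :=
  {τ : Finset V // τ ∈ X ∧ σ ⊆ τ ∧ τ.card = t + 1}

/-- The first `i+1` vertices of `σ` in increasing order. -/
def frontFace (i : ℕ) (σ : Finset V) : Finset V :=
  ((σ.sort (· ≤ ·)).take (i + 1)).toFinset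

/-- The vertices of `σ` from position `i` on, in increasing order. -/
def backFace (i : ℕ) (σ : Finset V) : Finset V :=
  ((σ.sort (· ≤ ·)).drop i).toFinset

lemma frontFace_subset (i : ℕ) (σ : Finset V) : frontFace i σ ⊆ σ := by
  intro x hx
  have hx' : x ∈ (σ.sort (· ≤ ·)).take (i + 1) := List.mem_toFinset.mp hx
  have := (List.take_sublist (i + 1) (σ.sort (· ≤ ·))).subset hx'
  simpa [Finset.mem_sort] using this

lemma backFace_subset (i : ℕ) (σ : Finset V) : backFace i σ ⊆ σ := by
  intro x hx
  have hx' : x ∈ (σ.sort (· ≤ ·)).drop i := List.mem_toFinset.mp hx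
  have := (List.drop_sublist i (σ.sort (· ≤ ·))).subset hx'
  simpa [Finset.mem_sort] using this

/-- The cup product of an `i`-cochain `α` with a cochain `β`:
`(α∪β)(σ)(τ) = α(front_i σ)(τ) · β(back_i σ)(τ)`. -/
def cup (X : Set (Finset V)) [DecidablePred (· ∈ X)] (t i : ℕ)
    (α β : (σ : Finset V) → Up X σ t → K) : (σ : Finset V) → Up X σ t → K :=
  fun σ τ =>
    α (frontFace i σ) ⟨τ.1, τ.2.1, (frontFace_subset i σ).trans τ.2.2.1, τ.2.2.2⟩ *
    β (backFace i σ) ⟨τ.1, τ.2.1, (backFace_subset i σ).trans τ.2.2.1, τ.2.2.2⟩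

/-- The coboundary `(δα)(ρ)(τ) = Σ_{σ ∈ X, σ ⊂ ρ, |σ| = |ρ|−1} α(σ)(τ)`. -/
def cobdry (X : Set (Finset V)) [DecidablePred (· ∈ X)] (t : ℕ)
    (α : (σ : Finset V) → Up X σ t → K) : (σ : Finset V) → Up X σ t → K :=
  fun ρ τ => ∑ σ : Finset V,
    if h : σ ∈ X ∧ σ ⊆ ρ ∧ σ.card + 1 = ρ.card
    then α σ ⟨τ.1, τ.2.1, h.2.1.trans τ.2.2.1, τ.2.2.2⟩ else 0

/-- `c` is a section of the Tanner sheaf (with local codes `Cc`) over the cell `σ`: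
its restriction above every `(t−1)`-cell `σ' ⊇ σ` lies in the local code `Cc σ'`. -/
def IsSection (X : Set (Finset V)) [DecidablePred (· ∈ X)] (t : ℕ)
    (Cc : (σ' : Finset V) → Set (Up X σ' t → K)) (σ : Finset V)
    (c : Up X σ t → K) : Prop :=
  ∀ (σ' : Finset V), σ' ∈ X → σ'.card = t → ∀ (h3 : σ ⊆ σ'),
    (fun τ : Up X σ' t => c ⟨τ.1, τ.2.1, h3.trans τ.2.2.1, τ.2.2.2⟩) ∈ Cc σ'

/-- `α` is an `i`-cochain of the Tanner sheaf: `α(σ)` is a section over each `i`-simplex. -/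
def IsCochain (X : Set (Finset V)) [DecidablePred (· ∈ X)] (t : ℕ)
    (Cc : (σ' : Finset V) → Set (Up X σ' t → K)) (i : ℕ)
    (α : (σ : Finset V) → Up X σ t → K) : Prop :=
  ∀ σ : Finset V, σ ∈ X → σ.card = i + 1 → IsSection X t Cc σ (α σ)

end SheafCup

/-!
`f_{ζ₄}` is additive in each argument, because the cup product is a pointwise product, so it
suffices to show that it vanishes when one argument is a coboundary `δγ` and the other two are
cocycles (a cocycle plus a coboundary is again a cocycle, as `δδ = 0`). In characteristic two the
Leibniz rule reads `δ(α ∪ β) = δα ∪ β + α ∪ δβ`; applied three times it shows that on top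
simplices `((α₁ ∪ α₂) ∪ α₃) ∪ ζ₄` with `δγ` in one slot agrees with `δH`, where `H` is the same
product with `γ` in that slot. Summing `δH` over `X(t)` regroups into
`Σ_{σ ∈ X(t-1)} Σ_{τ ⊇ σ} H(σ)(τ)`, and each inner sum is `Σ_τ c₁(τ)c₂(τ)c₃(τ)c₄(τ)` for local
codewords `cᵢ ∈ C_{i,σ}`, hence zero. When `ℓᵢ = 0` there is nothing to do: `δγ` vanishes on
vertices because `X` has no empty simplex.
-/

namespace List

variable {α : Type*}

theorem take_eraseIdx_of_le (l : List α) {k n : ℕ} (hk : k ≤ n) :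
    (l.eraseIdx k).take n = (l.take (n + 1)).eraseIdx k :=
  ext_getElem (by grind) (by grind)

theorem drop_eraseIdx_of_le (l : List α) {k n : ℕ} (hk : k ≤ n) :
    (l.eraseIdx k).drop n = l.drop (n + 1) :=
  ext_getElem (by grind) (by grind)

theorem drop_eraseIdx_of_ge (l : List α) {k n : ℕ} (hk : n ≤ k) :
    (l.eraseIdx k).drop n = (l.drop n).eraseIdx (k - n) :=
  ext_getElem (by grind) (by grind)

theorem Nodup.toFinset_eraseIdx [DecidableEq α] {l : List α} (hl : l.Nodup) {k : ℕ}
    (hk : k < l.length) : (l.eraseIdx k).toFinset = l.toFinset.erase l[k] := by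
  ext x
  rw [← hl.erase_getElem k hk, Finset.mem_erase, mem_toFinset, mem_toFinset,
    hl.mem_erase_iff, and_comm]

end List

namespace Finset

variable {α : Type*} [LinearOrder α]

theorem sort_erase (ρ : Finset α) (v : α) :
    (ρ.erase v).sort (· ≤ ·) = (ρ.sort (· ≤ ·)).erase v := by
  refine List.Perm.eq_of_pairwise' (pairwise_sort _ _)
    ((pairwise_sort ρ (· ≤ ·)).sublist List.erase_sublist) ?_
  rw [← Multiset.coe_eq_coe, ← Multiset.coe_erase, sort_eq, sort_eq, erase_val]

theorem sort_erase_getElem (ρ : Finset α) {k : ℕ} (hk : k < (ρ.sort (· ≤ ·)).length) :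
    (ρ.erase (ρ.sort (· ≤ ·))[k]).sort (· ≤ ·) = (ρ.sort (· ≤ ·)).eraseIdx k := by
  rw [sort_erase, (sort_nodup ρ _).erase_getElem k hk]

end Finset

namespace SheafCup

section Faces

open List

variable {V : Type*} [LinearOrder V]

theorem exists_getElem_of_mem_frontFace {i : ℕ} {ρ : Finset V} {v : V}
    (h : v ∈ frontFace i ρ) :
    ∃ k, ∃ hk : k < (ρ.sort (· ≤ ·)).length, k ≤ i ∧ (ρ.sort (· ≤ ·))[k] = v := by
  obtain ⟨k, hk, rfl⟩ := List.mem_iff_getElem.mp (List.mem_toFinset.mp h)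
  rw [length_take] at hk
  exact ⟨k, by omega, by omega, (List.getElem_take ..).symm⟩

theorem exists_getElem_of_mem_backFace {i : ℕ} {ρ : Finset V} {v : V}
    (h : v ∈ backFace i ρ) :
    ∃ k, ∃ hk : k < (ρ.sort (· ≤ ·)).length, i ≤ k ∧ (ρ.sort (· ≤ ·))[k] = v := by
  obtain ⟨k, hk, rfl⟩ := List.mem_iff_getElem.mp (List.mem_toFinset.mp h)
  rw [length_drop] at hk
  exact ⟨i + k, by omega, by omega, (List.getElem_drop ..).symm⟩

theorem frontFace_erase_of_mem_frontFace {i : ℕ} {ρ : Finset V} {v : V}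
    (h : v ∈ frontFace (i + 1) ρ) :
    frontFace i (ρ.erase v) = (frontFace (i + 1) ρ).erase v := by
  obtain ⟨k, hk, hki, rfl⟩ := exists_getElem_of_mem_frontFace h
  have hnd : ((ρ.sort (· ≤ ·)).take (i + 2)).Nodup :=
    (Finset.sort_nodup ρ _).sublist (take_sublist _ _)
  rw [frontFace, Finset.sort_erase_getElem ρ hk, take_eraseIdx_of_le _ hki,
    hnd.toFinset_eraseIdx (by rw [length_take]; omega), getElem_take]
  rfl

theorem backFace_erase_of_mem_frontFace {i : ℕ} {ρ : Finset V} {v : V}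
    (h : v ∈ frontFace i ρ) : backFace i (ρ.erase v) = backFace (i + 1) ρ := by
  obtain ⟨k, hk, hki, rfl⟩ := exists_getElem_of_mem_frontFace h
  rw [backFace, Finset.sort_erase_getElem ρ hk, drop_eraseIdx_of_le _ hki]
  rfl

theorem frontFace_erase_of_mem_backFace {i : ℕ} {ρ : Finset V} {v : V}
    (h : v ∈ backFace (i + 1) ρ) : frontFace i (ρ.erase v) = frontFace i ρ := by
  obtain ⟨k, hk, hki, rfl⟩ := exists_getElem_of_mem_backFace h
  rw [frontFace, Finset.sort_erase_getElem ρ hk, take_eraseIdx_eq_take_of_le _ _ _ hki]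
  rfl

theorem backFace_erase_of_mem_backFace {i : ℕ} {ρ : Finset V} {v : V}
    (h : v ∈ backFace i ρ) :
    backFace i (ρ.erase v) = (backFace i ρ).erase v := by
  obtain ⟨k, hk, hki, rfl⟩ := exists_getElem_of_mem_backFace h
  have hnd : ((ρ.sort (· ≤ ·)).drop i).Nodup :=
    (Finset.sort_nodup ρ _).sublist (drop_sublist _ _)
  rw [backFace, Finset.sort_erase_getElem ρ hk, drop_eraseIdx_of_ge _ hki,
    hnd.toFinset_eraseIdx (by rw [length_drop]; omega)]
  simp only [getElem_drop, Nat.add_sub_cancel' hki]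
  rfl

theorem frontFace_disjoint_backFace (i : ℕ) (ρ : Finset V) :
    Disjoint (frontFace i ρ) (backFace (i + 1) ρ) := by
  have hnd := Finset.sort_nodup ρ (· ≤ ·)
  rw [← take_append_drop (i + 1) (ρ.sort (· ≤ ·)), nodup_append] at hnd
  exact Finset.disjoint_left.mpr fun a ha hb =>
    hnd.2.2 a (mem_toFinset.mp ha) a (mem_toFinset.mp hb) rfl

theorem frontFace_union_backFace (i : ℕ) (ρ : Finset V) :
    frontFace i ρ ∪ backFace (i + 1) ρ = ρ := by
  rw [frontFace, backFace, ← toFinset_append, take_append_drop, Finset.sort_toFinset]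

theorem getElem_mem_frontFace {i k : ℕ} {ρ : Finset V} (hk : k < (ρ.sort (· ≤ ·)).length)
    (hki : k ≤ i) : (ρ.sort (· ≤ ·))[k] ∈ frontFace i ρ :=
  mem_toFinset.mpr (mem_take_iff_getElem.mpr ⟨k, by omega, rfl⟩)

theorem getElem_mem_backFace {i k : ℕ} {ρ : Finset V} (hk : k < (ρ.sort (· ≤ ·)).length)
    (hik : i ≤ k) : (ρ.sort (· ≤ ·))[k] ∈ backFace i ρ :=
  mem_toFinset.mpr
    (mem_drop_iff_getElem.mpr ⟨k - i, by omega, by simp [Nat.add_sub_cancel' hik]⟩)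

theorem card_frontFace {i : ℕ} {ρ : Finset V} (h : i < ρ.card) :
    (frontFace i ρ).card = i + 1 := by
  rw [frontFace, toFinset_card_of_nodup ((Finset.sort_nodup ρ _).sublist (take_sublist _ _)),
    length_take, Finset.length_sort]
  omega

theorem card_backFace (i : ℕ) (ρ : Finset V) : (backFace i ρ).card = ρ.card - i := by
  rw [backFace, toFinset_card_of_nodup ((Finset.sort_nodup ρ _).sublist (drop_sublist _ _)),
    length_drop, Finset.length_sort]

theorem frontFace_subset_frontFace_succ (i : ℕ) (ρ : Finset V) :
    frontFace i ρ ⊆ frontFace (i + 1) ρ := fun _ hx =>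
  mem_toFinset.mpr (take_subset_take_left _ (Nat.le_succ _) (mem_toFinset.mp hx))

theorem backFace_succ_subset_backFace (i : ℕ) (ρ : Finset V) :
    backFace (i + 1) ρ ⊆ backFace i ρ := fun _ hx => by
  rw [backFace, ← drop_drop] at hx
  exact mem_toFinset.mpr (drop_subset _ _ (mem_toFinset.mp hx))

theorem frontFace_succ_erase {i : ℕ} {ρ : Finset V} (h : i + 1 < ρ.card) :
    (frontFace (i + 1) ρ).erase ((ρ.sort (· ≤ ·))[i + 1]'(by rwa [Finset.length_sort])) =
      frontFace i ρ := by
  have hk : i + 1 < (ρ.sort (· ≤ ·)).length := by rwa [Finset.length_sort]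
  rw [← frontFace_erase_of_mem_frontFace (getElem_mem_frontFace hk le_rfl),
    frontFace_erase_of_mem_backFace (getElem_mem_backFace hk le_rfl)]

theorem backFace_erase_getElem {i : ℕ} {ρ : Finset V} (h : i < ρ.card) :
    (backFace i ρ).erase ((ρ.sort (· ≤ ·))[i]'(by rwa [Finset.length_sort])) =
      backFace (i + 1) ρ := by
  have hk : i < (ρ.sort (· ≤ ·)).length := by rwa [Finset.length_sort]
  rw [← backFace_erase_of_mem_backFace (getElem_mem_backFace hk le_rfl),
    backFace_erase_of_mem_frontFace (getElem_mem_frontFace hk le_rfl)]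

theorem sum_frontFace_add_sum_backFace {M : Type*} [AddCommMonoid M] (i : ℕ) (ρ : Finset V)
    (f : V → M) : ∑ v ∈ frontFace i ρ, f v + ∑ v ∈ backFace (i + 1) ρ, f v = ∑ v ∈ ρ, f v := by
  rw [← Finset.sum_union (frontFace_disjoint_backFace i ρ), frontFace_union_backFace]

end Faces

section Evaluation

variable {V : Type*} {K : Type*} {X : Set (Finset V)} [DecidablePred (· ∈ X)] {t : ℕ}

abbrev Cochain (X : Set (Finset V)) [DecidablePred (· ∈ X)] (t : ℕ) (K : Type*) : Type _ :=
  (σ : Finset V) → Up X σ t → K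

def IsDownClosed (X : Set (Finset V)) : Prop :=
  ∀ σ ∈ X, ∀ σ' : Finset V, σ' ⊆ σ → σ'.Nonempty → σ' ∈ X

theorem IsDownClosed.mem_of_subset (hX : IsDownClosed X) {σ σ' : Finset V} (hσ : σ ∈ X)
    (h : σ' ⊆ σ) (hcard : 0 < σ'.card) : σ' ∈ X :=
  hX σ hσ σ' h (Finset.card_pos.mp hcard)

/-- Unlike `α c τ`, `eval α c T` carries no proof that `c ⊆ T`, so it can be rewritten along
equalities of cells `c`. -/
def eval [DecidableEq V] [Zero K] (α : Cochain X t K) (c T : Finset V) : K :=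
  if h : T ∈ X ∧ c ⊆ T ∧ T.card = t + 1 then α c ⟨T, h⟩ else 0

theorem apply_eq_eval [DecidableEq V] [Zero K] (α : Cochain X t K) {c : Finset V} (τ : Up X c t) :
    α c τ = eval α c τ.1 := by
  rw [eval, dif_pos τ.2]

theorem eval_eq_zero [DecidableEq V] [Zero K] (α : Cochain X t K) (c : Finset V) {T : Finset V}
    (hT : ¬(T ∈ X ∧ T.card = t + 1)) : eval α c T = 0 :=
  dif_neg fun h => hT ⟨h.1, h.2.2⟩

def EqInDegree (n : ℕ) (α β : Cochain X t K) : Prop :=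
  ∀ ρ ∈ X, ρ.card = n + 1 → ∀ τ : Up X ρ t, α ρ τ = β ρ τ

theorem EqInDegree.refl {n : ℕ} (α : Cochain X t K) : EqInDegree n α α :=
  fun _ _ _ _ => rfl

theorem EqInDegree.symm {n : ℕ} {α β : Cochain X t K} (h : EqInDegree n α β) :
    EqInDegree n β α :=
  fun ρ hρ hc τ => (h ρ hρ hc τ).symm

theorem EqInDegree.trans {n : ℕ} {α β γ : Cochain X t K} (h : EqInDegree n α β)
    (h' : EqInDegree n β γ) : EqInDegree n α γ :=
  fun ρ hρ hc τ => (h ρ hρ hc τ).trans (h' ρ hρ hc τ)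

def diagSum [Fintype V] [AddCommMonoid K] (α : Cochain X t K) : K :=
  ∑ τ : {τ : Finset V // τ ∈ X ∧ τ.card = t + 1}, α τ.1 ⟨τ.1, τ.2.1, subset_rfl, τ.2.2⟩

theorem diagSum_add [Fintype V] [AddCommMonoid K] (α β : Cochain X t K) :
    diagSum (α + β) = diagSum α + diagSum β :=
  Finset.sum_add_distrib

theorem diagSum_zero [Fintype V] [AddCommMonoid K] : diagSum (0 : Cochain X t K) = 0 :=
  Finset.sum_const_zero

theorem EqInDegree.diagSum_eq [Fintype V] [AddCommMonoid K] {α β : Cochain X t K} (h : EqInDegree t α β) :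
    diagSum α = diagSum β :=
  Finset.sum_congr rfl fun τ _ => h τ.1 τ.2.1 τ.2.2 _

end Evaluation

section Cochains

variable {V : Type*} [Fintype V] [LinearOrder V] {K : Type*} [Field K]
variable {X : Set (Finset V)} [DecidablePred (· ∈ X)] {t : ℕ}

theorem cup_apply (i : ℕ) (α β : Cochain X t K) {c : Finset V} (τ : Up X c t) :
    cup X t i α β c τ = eval α (frontFace i c) τ.1 * eval β (backFace i c) τ.1 := by
  rw [cup, apply_eq_eval α, apply_eq_eval β]

theorem eval_cup (i : ℕ) (α β : Cochain X t K) {c T : Finset V} (hcT : c ⊆ T) :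
    eval (cup X t i α β) c T = eval α (frontFace i c) T * eval β (backFace i c) T := by
  by_cases hT : T ∈ X ∧ T.card = t + 1
  · rw [eval, dif_pos ⟨hT.1, hcT, hT.2⟩, cup_apply]
  · rw [eval_eq_zero _ _ hT, eval_eq_zero _ _ hT, zero_mul]

theorem cobdry_apply (hX : IsDownClosed X) (α : Cochain X t K) {ρ : Finset V} (hρ : ρ ∈ X)
    (h2 : 2 ≤ ρ.card) (τ : Up X ρ t) :
    cobdry X t α ρ τ = ∑ v ∈ ρ, eval α (ρ.erase v) τ.1 := by
  rw [cobdry, ← Finset.sum_subset (Finset.subset_univ (ρ.image ρ.erase)),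
    Finset.sum_image (Finset.erase_injOn ρ)]
  · refine Finset.sum_congr rfl fun v hv => ?_
    have hcard : (ρ.erase v).card + 1 = ρ.card := Finset.card_erase_add_one hv
    rw [dif_pos ⟨hX.mem_of_subset hρ (Finset.erase_subset v ρ) (by omega),
      Finset.erase_subset v ρ, hcard⟩, apply_eq_eval α]
  · refine fun σ _ hσ => dif_neg fun ⟨_, hsub, hcard⟩ => hσ ?_
    obtain ⟨a, ha, rfl⟩ := Finset.exists_eq_insert_iff.mpr ⟨hsub, hcard⟩
    exact Finset.mem_image.mpr ⟨a, Finset.mem_insert_self a σ, Finset.erase_insert ha⟩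

theorem eval_cobdry (hX : IsDownClosed X) (α : Cochain X t K) {c T : Finset V} (hc : c ∈ X)
    (h2 : 2 ≤ c.card) (hcT : c ⊆ T) :
    eval (cobdry X t α) c T = ∑ v ∈ c, eval α (c.erase v) T := by
  by_cases hT : T ∈ X ∧ T.card = t + 1
  · rw [eval, dif_pos ⟨hT.1, hcT, hT.2⟩, cobdry_apply hX α hc h2]
  · rw [eval_eq_zero _ _ hT]
    exact (Finset.sum_eq_zero fun v _ => eval_eq_zero _ _ hT).symm

def IsCocycle (n : ℕ) (α : Cochain X t K) : Prop :=
  EqInDegree (n + 1) (cobdry X t α) 0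

theorem EqInDegree.cup_left (hX : IsDownClosed X) {i n : ℕ} {α α' : Cochain X t K}
    (h : EqInDegree i α α') (hin : i ≤ n) (β : Cochain X t K) :
    EqInDegree n (cup X t i α β) (cup X t i α' β) := by
  intro ρ hρ hc τ
  have hcard : (frontFace i ρ).card = i + 1 := card_frontFace (by omega)
  simp only [cup]
  rw [h _ (hX.mem_of_subset hρ (frontFace_subset i ρ) (by omega)) hcard]

theorem EqInDegree.cup_right (hX : IsDownClosed X) {i j n : ℕ} {β β' : Cochain X t K}
    (h : EqInDegree j β β') (hn : i + j = n) (α : Cochain X t K) :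
    EqInDegree n (cup X t i α β) (cup X t i α β') := by
  intro ρ hρ hc τ
  have hcard : (backFace i ρ).card = j + 1 := by rw [card_backFace]; omega
  simp only [cup]
  rw [h _ (hX.mem_of_subset hρ (backFace_subset i ρ) (by omega)) hcard]

theorem cup_add_left (i : ℕ) (α α' β : Cochain X t K) :
    cup X t i (α + α') β = cup X t i α β + cup X t i α' β := by
  funext σ τ
  exact add_mul _ _ _

theorem cup_add_right (i : ℕ) (α β β' : Cochain X t K) :
    cup X t i α (β + β') = cup X t i α β + cup X t i α β' := by
  funext σ τ
  exact mul_add _ _ _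

theorem zero_cup (i : ℕ) (β : Cochain X t K) : cup X t i 0 β = 0 := by
  funext σ τ
  exact zero_mul _

theorem cup_zero (i : ℕ) (α : Cochain X t K) : cup X t i α 0 = 0 := by
  funext σ τ
  exact mul_zero _

theorem cobdry_add (α β : Cochain X t K) : cobdry X t (α + β) = cobdry X t α + cobdry X t β := by
  funext ρ τ
  simp only [cobdry, Pi.add_apply, ← Finset.sum_add_distrib]
  exact Finset.sum_congr rfl fun σ _ => by split_ifs <;> simp

theorem IsCocycle.add {n : ℕ} {α β : Cochain X t K} (hα : IsCocycle n α) (hβ : IsCocycle n β) :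
    IsCocycle n (α + β) := by
  intro ρ hρ hc τ
  rw [cobdry_add, Pi.add_apply, Pi.add_apply, hα ρ hρ hc τ, hβ ρ hρ hc τ]
  exact add_zero _

theorem eqInDegree_zero_cobdry_zero (hne : ∀ σ ∈ X, σ.Nonempty) (γ : Cochain X t K) :
    EqInDegree 0 (cobdry X t γ) 0 :=
  fun _ _ hc _ => Finset.sum_eq_zero fun σ _ =>
    dif_neg fun h => (hne σ h.1).ne_empty (Finset.card_eq_zero.mp (by omega))

theorem isCocycle_cobdry [CharP K 2] (hne : ∀ σ ∈ X, σ.Nonempty) (hX : IsDownClosed X)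
    (γ : Cochain X t K) (n : ℕ) : IsCocycle n (cobdry X t γ) := by
  intro ρ hρ hc τ
  have hmem : ∀ v ∈ ρ, ρ.erase v ∈ X ∧ (ρ.erase v).card = n + 1 := fun v hv =>
    ⟨hX.mem_of_subset hρ (Finset.erase_subset v ρ) (by rw [Finset.card_erase_of_mem hv]; omega),
      by rw [Finset.card_erase_of_mem hv]; omega⟩
  have hsub : ∀ v, ρ.erase v ⊆ τ.1 := fun v => (Finset.erase_subset v ρ).trans τ.2.2.1
  rw [apply_eq_eval (cobdry X t (cobdry X t γ)), eval_cobdry hX _ hρ (by omega) τ.2.2.1]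
  rcases n with _ | n
  · refine Finset.sum_eq_zero fun v hv => ?_
    rw [eval, dif_pos ⟨τ.2.1, hsub v, τ.2.2.2⟩]
    exact eqInDegree_zero_cobdry_zero hne γ _ (hmem v hv).1 (hmem v hv).2 _
  · -- each face of codimension two is counted twice, once for each order of removal
    rw [Finset.sum_congr rfl fun v hv =>
        eval_cobdry hX γ (hmem v hv).1 (by rw [(hmem v hv).2]; omega) (hsub v),
      Finset.sum_sigma']
    refine Finset.sum_involution (fun p _ => ⟨p.2, p.1⟩) (fun p _ => ?_) (fun p hp _ => ?_)
      (fun p hp => ?_) (fun _ _ => rfl)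
    · rw [Finset.erase_right_comm]
      exact CharTwo.add_self_eq_zero _
    · have hne' := (Finset.mem_erase.mp (Finset.mem_sigma.mp hp).2).1
      exact fun h => hne' (congrArg Sigma.fst h)
    · obtain ⟨hp₁, hp₂⟩ := Finset.mem_sigma.mp hp
      obtain ⟨hne', hp₂⟩ := Finset.mem_erase.mp hp₂
      exact Finset.mem_sigma.mpr ⟨hp₂, Finset.mem_erase.mpr ⟨hne'.symm, hp₁⟩⟩

theorem cobdry_cup [CharP K 2] (hX : IsDownClosed X) {i j n : ℕ} (hn : i + j + 1 = n)
    (α β : Cochain X t K) :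
    EqInDegree n (cobdry X t (cup X t i α β))
      (cup X t (i + 1) (cobdry X t α) β + cup X t i α (cobdry X t β)) := by
  intro ρ hρ hc τ
  have hρT : ρ ⊆ τ.1 := τ.2.2.1
  have hF : (frontFace (i + 1) ρ).card = i + 2 := card_frontFace (by omega)
  have hB : (backFace i ρ).card = j + 2 := by rw [card_backFace]; omega
  have hk : i + 1 < (ρ.sort (· ≤ ·)).length := by rw [Finset.length_sort]; omega
  have hfront : ∀ v ∈ frontFace i ρ, eval (cup X t i α β) (ρ.erase v) τ.1 =
      eval α ((frontFace (i + 1) ρ).erase v) τ.1 * eval β (backFace (i + 1) ρ) τ.1 :=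
    fun v hv => by
      rw [eval_cup _ _ _ ((Finset.erase_subset v ρ).trans hρT),
        frontFace_erase_of_mem_frontFace (frontFace_subset_frontFace_succ i ρ hv),
        backFace_erase_of_mem_frontFace hv]
  have hback : ∀ v ∈ backFace (i + 1) ρ, eval (cup X t i α β) (ρ.erase v) τ.1 =
      eval α (frontFace i ρ) τ.1 * eval β ((backFace i ρ).erase v) τ.1 :=
    fun v hv => by
      rw [eval_cup _ _ _ ((Finset.erase_subset v ρ).trans hρT),
        frontFace_erase_of_mem_backFace hv,
        backFace_erase_of_mem_backFace (backFace_succ_subset_backFace i ρ hv)]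
  rw [Pi.add_apply, Pi.add_apply, cup_apply, cup_apply, apply_eq_eval (cobdry X t (cup X t i α β)),
    eval_cobdry hX _ hρ (by omega) hρT,
    eval_cobdry hX α (hX.mem_of_subset hρ (frontFace_subset _ _) (by omega)) (by omega)
      ((frontFace_subset _ _).trans hρT),
    eval_cobdry hX β (hX.mem_of_subset hρ (backFace_subset _ _) (by omega)) (by omega)
      ((backFace_subset _ _).trans hρT),
    ← Finset.add_sum_erase _ _ (getElem_mem_frontFace hk le_rfl), frontFace_succ_erase (by omega),
    ← Finset.add_sum_erase _ _ (getElem_mem_backFace (i := i) (Nat.lt_of_succ_lt hk) le_rfl),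
    backFace_erase_getElem (by omega), ← sum_frontFace_add_sum_backFace i ρ,
    Finset.sum_congr rfl hfront, Finset.sum_congr rfl hback, ← Finset.sum_mul, ← Finset.mul_sum]
  -- the two boundary terms `α(front_i ρ) β(back_{i+1} ρ)` cancel in characteristic two
  linear_combination -CharTwo.add_self_eq_zero
    (eval α (frontFace i ρ) τ.1 * eval β (backFace (i + 1) ρ) τ.1)

theorem cobdry_cup_of_isCocycle_right [CharP K 2] (hX : IsDownClosed X) {i j n : ℕ}
    {β : Cochain X t K} (hβ : IsCocycle j β) (hn : i + j + 1 = n) (α : Cochain X t K) :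
    EqInDegree n (cobdry X t (cup X t i α β)) (cup X t (i + 1) (cobdry X t α) β) := by
  intro ρ hρ hc τ
  rw [cobdry_cup hX hn α β ρ hρ hc τ, Pi.add_apply, Pi.add_apply,
    EqInDegree.cup_right hX hβ (by omega : i + (j + 1) = n) α ρ hρ hc τ, cup_zero]
  exact add_zero _

theorem cobdry_cup_of_isCocycle_left [CharP K 2] (hX : IsDownClosed X) {i j n : ℕ}
    {α : Cochain X t K} (hα : IsCocycle i α) (hn : i + j + 1 = n) (β : Cochain X t K) :
    EqInDegree n (cobdry X t (cup X t i α β)) (cup X t i α (cobdry X t β)) := by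
  intro ρ hρ hc τ
  rw [cobdry_cup hX hn α β ρ hρ hc τ, Pi.add_apply, Pi.add_apply,
    EqInDegree.cup_left hX hα (by omega : i + 1 ≤ n) β ρ hρ hc τ, zero_cup]
  exact zero_add _

theorem IsCocycle.cup [CharP K 2] (hX : IsDownClosed X) {i j : ℕ} {α β : Cochain X t K}
    (hα : IsCocycle i α) (hβ : IsCocycle j β) : IsCocycle (i + j) (cup X t i α β) := by
  intro ρ hρ hc τ
  rw [cobdry_cup_of_isCocycle_right hX hβ rfl α ρ hρ hc τ,
    EqInDegree.cup_left hX hα (by omega : i + 1 ≤ i + j + 1) β ρ hρ hc τ, zero_cup]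

section Sections

variable {C : (σ : Finset V) → Submodule K (Up X σ t → K)}

theorem IsCochain.add {n : ℕ} {α β : Cochain X t K} (hα : IsCochain X t (C ·) n α)
    (hβ : IsCochain X t (C ·) n β) : IsCochain X t (C ·) n (α + β) :=
  fun σ hσ hc σ' h₁ h₂ h₃ => add_mem (hα σ hσ hc σ' h₁ h₂ h₃) (hβ σ hσ hc σ' h₁ h₂ h₃)

theorem isCochain_cobdry {n : ℕ} {γ : Cochain X t K}
    (hγ : ∀ σ ∈ X, σ.card = n → IsSection X t (C ·) σ (γ σ)) :
    IsCochain X t (C ·) n (cobdry X t γ) := by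
  intro σ hσ hc σ' h₁ h₂ h₃
  have hsum : (fun τ : Up X σ' t => cobdry X t γ σ ⟨τ.1, τ.2.1, h₃.trans τ.2.2.1, τ.2.2.2⟩) =
      ∑ s : Finset V, if h : s ∈ X ∧ s ⊆ σ ∧ s.card + 1 = σ.card then
        fun τ : Up X σ' t => γ s ⟨τ.1, τ.2.1, (h.2.1.trans h₃).trans τ.2.2.1, τ.2.2.2⟩
      else 0 := by
    funext τ
    rw [Finset.sum_apply]
    exact Finset.sum_congr rfl fun s _ => by split_ifs <;> rfl
  show _ ∈ C σ'
  rw [hsum]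
  refine Submodule.sum_mem _ fun s _ => ?_
  split_ifs with h
  exacts [hγ s h.1 (by omega) σ' h₁ h₂ (h.2.1.trans h₃), zero_mem _]

theorem IsCochain.restrict_mem (hX : IsDownClosed X) {d : ℕ} {g : Cochain X t K}
    (hg : IsCochain X t (C ·) d g) {σ f : Finset V} (hσ : σ ∈ X) (hσt : σ.card = t)
    (hf : f ⊆ σ) (hfc : f.card = d + 1) :
    (fun τ : Up X σ t => g f ⟨τ.1, τ.2.1, hf.trans τ.2.2.1, τ.2.2.2⟩) ∈ C σ :=
  hg f (hX.mem_of_subset hσ hf (by omega)) hfc σ hσ hσt hf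

end Sections

def QuadOrthogonal (C₁ C₂ C₃ C₄ : (σ : Finset V) → Submodule K (Up X σ t → K)) : Prop :=
  ∀ σ ∈ X, σ.card = t → ∀ c₁ ∈ C₁ σ, ∀ c₂ ∈ C₂ σ, ∀ c₃ ∈ C₃ σ, ∀ c₄ ∈ C₄ σ,
    ∑ τ : Up X σ t, c₁ τ * c₂ τ * c₃ τ * c₄ τ = 0

variable {C₁ C₂ C₃ C₄ : (σ : Finset V) → Submodule K (Up X σ t → K)}

theorem sum_cup_eq_zero (hX : IsDownClosed X) (horth : QuadOrthogonal C₁ C₂ C₃ C₄)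
    {d₁ d₂ d₃ d₄ : ℕ} (hd : d₁ + d₂ + d₃ + d₄ + 1 = t) {g₁ g₂ g₃ g₄ : Cochain X t K}
    (h₁ : IsCochain X t (C₁ ·) d₁ g₁) (h₂ : IsCochain X t (C₂ ·) d₂ g₂)
    (h₃ : IsCochain X t (C₃ ·) d₃ g₃) (h₄ : IsCochain X t (C₄ ·) d₄ g₄)
    {σ : Finset V} (hσ : σ ∈ X) (hσt : σ.card = t) :
    ∑ τ : Up X σ t,
      cup X t (d₁ + d₂ + d₃) (cup X t (d₁ + d₂) (cup X t d₁ g₁ g₂) g₃) g₄ σ τ = 0 := by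
  have hA : frontFace (d₁ + d₂ + d₃) σ ⊆ σ := frontFace_subset _ _
  have hB : frontFace (d₁ + d₂) (frontFace (d₁ + d₂ + d₃) σ) ⊆ σ :=
    (frontFace_subset _ _).trans hA
  have cA : (frontFace (d₁ + d₂ + d₃) σ).card = d₁ + d₂ + d₃ + 1 := card_frontFace (by omega)
  have cB : (frontFace (d₁ + d₂) (frontFace (d₁ + d₂ + d₃) σ)).card = d₁ + d₂ + 1 :=
    card_frontFace (by omega)
  exact horth σ hσ hσt
    _ (h₁.restrict_mem hX hσ hσt ((frontFace_subset _ _).trans hB) (card_frontFace (by omega)))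
    _ (h₂.restrict_mem hX hσ hσt ((backFace_subset _ _).trans hB)
      (by rw [card_backFace, cB]; omega))
    _ (h₃.restrict_mem hX hσ hσt ((backFace_subset _ _).trans hA)
      (by rw [card_backFace, cA]; omega))
    _ (h₄.restrict_mem hX hσ hσt (backFace_subset _ _) (by rw [card_backFace]; omega))

theorem diagSum_cobdry_eq_zero {H : Cochain X t K}
    (hH : ∀ σ ∈ X, σ.card = t → ∑ τ : Up X σ t, H σ τ = 0) :
    diagSum (cobdry X t H) = 0 := by
  simp only [diagSum, cobdry]
  rw [Finset.sum_comm]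
  refine Finset.sum_eq_zero fun σ _ => ?_
  by_cases hσ : σ ∈ X ∧ σ.card = t
  · refine (Fintype.sum_of_injective (fun τ : Up X σ t => ⟨τ.1, τ.2.1, τ.2.2.2⟩)
      (fun _ _ h => Subtype.ext (by simpa using h)) _ _ ?_ fun τ => ?_).symm.trans
      (hH σ hσ.1 hσ.2)
    · exact fun τ hτ => dif_neg fun h => hτ ⟨⟨τ.1, τ.2.1, h.2.1, τ.2.2⟩, rfl⟩
    · rw [dif_pos ⟨hσ.1, τ.2.2.1, by rw [τ.2.2.2, hσ.2]⟩]
  · exact Finset.sum_eq_zero fun τ _ => dif_neg fun h => hσ ⟨h.1, by have := τ.2.2; omega⟩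

theorem diagSum_cup_eq_zero_of_eqInDegree_cobdry [CharP K 2] (hX : IsDownClosed X)
    (horth : QuadOrthogonal C₁ C₂ C₃ C₄) {d₁ d₂ d₃ d₄ : ℕ} (hd : d₁ + d₂ + d₃ + d₄ + 1 = t)
    {g₁ g₂ g₃ g₄ : Cochain X t K}
    (h₁ : IsCochain X t (C₁ ·) d₁ g₁) (h₂ : IsCochain X t (C₂ ·) d₂ g₂)
    (h₃ : IsCochain X t (C₃ ·) d₃ g₃) (h₄ : IsCochain X t (C₄ ·) d₄ g₄) (hc₄ : IsCocycle d₄ g₄)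
    {A : Cochain X t K}
    (hA : EqInDegree (d₁ + d₂ + d₃ + 1) A
      (cobdry X t (cup X t (d₁ + d₂) (cup X t d₁ g₁ g₂) g₃))) :
    diagSum (cup X t (d₁ + d₂ + d₃ + 1) A g₄) = 0 := by
  rw [((hA.cup_left hX (by omega) g₄).trans
    (cobdry_cup_of_isCocycle_right hX hc₄ (by omega) _).symm).diagSum_eq]
  exact diagSum_cobdry_eq_zero fun σ hσ hσt => sum_cup_eq_zero hX horth hd h₁ h₂ h₃ h₄ hσ hσt

/-- The form `f_{ζ₄}` of the statement. -/
def trilinearForm (ℓ₁ ℓ₂ ℓ₃ : ℕ) (ζ₄ α₁ α₂ α₃ : Cochain X t K) : K :=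
  diagSum (cup X t (ℓ₁ + ℓ₂ + ℓ₃) (cup X t (ℓ₁ + ℓ₂) (cup X t ℓ₁ α₁ α₂) α₃) ζ₄)

section TrilinearForm

variable {ℓ₁ ℓ₂ ℓ₃ ℓ₄ : ℕ} {ζ₄ α₁ α₂ α₃ : Cochain X t K}

theorem trilinearForm_add_first (α₁' : Cochain X t K) :
    trilinearForm ℓ₁ ℓ₂ ℓ₃ ζ₄ (α₁ + α₁') α₂ α₃ =
      trilinearForm ℓ₁ ℓ₂ ℓ₃ ζ₄ α₁ α₂ α₃ + trilinearForm ℓ₁ ℓ₂ ℓ₃ ζ₄ α₁' α₂ α₃ := by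
  simp only [trilinearForm, cup_add_left, diagSum_add]

theorem trilinearForm_add_second (α₂' : Cochain X t K) :
    trilinearForm ℓ₁ ℓ₂ ℓ₃ ζ₄ α₁ (α₂ + α₂') α₃ =
      trilinearForm ℓ₁ ℓ₂ ℓ₃ ζ₄ α₁ α₂ α₃ + trilinearForm ℓ₁ ℓ₂ ℓ₃ ζ₄ α₁ α₂' α₃ := by
  simp only [trilinearForm, cup_add_left, cup_add_right, diagSum_add]

theorem trilinearForm_add_third (α₃' : Cochain X t K) :
    trilinearForm ℓ₁ ℓ₂ ℓ₃ ζ₄ α₁ α₂ (α₃ + α₃') =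
      trilinearForm ℓ₁ ℓ₂ ℓ₃ ζ₄ α₁ α₂ α₃ + trilinearForm ℓ₁ ℓ₂ ℓ₃ ζ₄ α₁ α₂ α₃' := by
  simp only [trilinearForm, cup_add_left, cup_add_right, diagSum_add]

theorem trilinearForm_congr (hX : IsDownClosed X) (hℓ : ℓ₁ + ℓ₂ + ℓ₃ ≤ t)
    {α₁' α₂' α₃' : Cochain X t K} (h₁ : EqInDegree ℓ₁ α₁ α₁') (h₂ : EqInDegree ℓ₂ α₂ α₂')
    (h₃ : EqInDegree ℓ₃ α₃ α₃') :
    trilinearForm ℓ₁ ℓ₂ ℓ₃ ζ₄ α₁ α₂ α₃ = trilinearForm ℓ₁ ℓ₂ ℓ₃ ζ₄ α₁' α₂' α₃' := by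
  have h₁₂ := (h₁.cup_left hX (Nat.le_add_right ℓ₁ ℓ₂) α₂).trans (h₂.cup_right hX rfl α₁')
  have h₁₂₃ := (h₁₂.cup_left hX (Nat.le_add_right _ ℓ₃) α₃).trans (h₃.cup_right hX rfl _)
  exact (h₁₂₃.cup_left hX hℓ ζ₄).diagSum_eq

theorem trilinearForm_cobdry_first [CharP K 2] (hne : ∀ σ ∈ X, σ.Nonempty)
    (hX : IsDownClosed X) (horth : QuadOrthogonal C₁ C₂ C₃ C₄) (hℓ : ℓ₁ + ℓ₂ + ℓ₃ + ℓ₄ = t)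
    {γ : Cochain X t K} (hγ : ∀ σ ∈ X, σ.card = ℓ₁ → IsSection X t (C₁ ·) σ (γ σ))
    (h₂ : IsCochain X t (C₂ ·) ℓ₂ α₂) (h₃ : IsCochain X t (C₃ ·) ℓ₃ α₃)
    (h₄ : IsCochain X t (C₄ ·) ℓ₄ ζ₄)
    (hc₂ : IsCocycle ℓ₂ α₂) (hc₃ : IsCocycle ℓ₃ α₃) (hc₄ : IsCocycle ℓ₄ ζ₄) :
    trilinearForm ℓ₁ ℓ₂ ℓ₃ ζ₄ (cobdry X t γ) α₂ α₃ = 0 := by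
  rcases ℓ₁ with _ | d
  · rw [trilinearForm_congr hX (by omega) (eqInDegree_zero_cobdry_zero hne γ)
      (EqInDegree.refl α₂) (EqInDegree.refl α₃)]
    simp only [trilinearForm, zero_cup, diagSum_zero]
  · rw [trilinearForm, show d + 1 + ℓ₂ = d + ℓ₂ + 1 by omega,
      show d + ℓ₂ + 1 + ℓ₃ = d + ℓ₂ + ℓ₃ + 1 by omega]
    exact diagSum_cup_eq_zero_of_eqInDegree_cobdry hX horth (by omega) hγ h₂ h₃ h₄ hc₄
      (((cobdry_cup_of_isCocycle_right hX hc₂ rfl γ).symm.cup_left hX (by omega) α₃).trans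
        (cobdry_cup_of_isCocycle_right hX hc₃ rfl _).symm)

theorem trilinearForm_cobdry_second [CharP K 2] (hne : ∀ σ ∈ X, σ.Nonempty)
    (hX : IsDownClosed X) (horth : QuadOrthogonal C₁ C₂ C₃ C₄) (hℓ : ℓ₁ + ℓ₂ + ℓ₃ + ℓ₄ = t)
    {γ : Cochain X t K} (h₁ : IsCochain X t (C₁ ·) ℓ₁ α₁)
    (hγ : ∀ σ ∈ X, σ.card = ℓ₂ → IsSection X t (C₂ ·) σ (γ σ))
    (h₃ : IsCochain X t (C₃ ·) ℓ₃ α₃) (h₄ : IsCochain X t (C₄ ·) ℓ₄ ζ₄)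
    (hc₁ : IsCocycle ℓ₁ α₁) (hc₃ : IsCocycle ℓ₃ α₃) (hc₄ : IsCocycle ℓ₄ ζ₄) :
    trilinearForm ℓ₁ ℓ₂ ℓ₃ ζ₄ α₁ (cobdry X t γ) α₃ = 0 := by
  rcases ℓ₂ with _ | d
  · rw [trilinearForm_congr hX (by omega) (EqInDegree.refl α₁)
      (eqInDegree_zero_cobdry_zero hne γ) (EqInDegree.refl α₃)]
    simp only [trilinearForm, cup_zero, zero_cup, diagSum_zero]
  · rw [trilinearForm, show ℓ₁ + (d + 1) = ℓ₁ + d + 1 by omega,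
      show ℓ₁ + d + 1 + ℓ₃ = ℓ₁ + d + ℓ₃ + 1 by omega]
    exact diagSum_cup_eq_zero_of_eqInDegree_cobdry hX horth (by omega) h₁ hγ h₃ h₄ hc₄
      (((cobdry_cup_of_isCocycle_left hX hc₁ rfl γ).symm.cup_left hX (by omega) α₃).trans
        (cobdry_cup_of_isCocycle_right hX hc₃ rfl _).symm)

theorem trilinearForm_cobdry_third [CharP K 2] (hne : ∀ σ ∈ X, σ.Nonempty)
    (hX : IsDownClosed X) (horth : QuadOrthogonal C₁ C₂ C₃ C₄) (hℓ : ℓ₁ + ℓ₂ + ℓ₃ + ℓ₄ = t)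
    {γ : Cochain X t K} (h₁ : IsCochain X t (C₁ ·) ℓ₁ α₁) (h₂ : IsCochain X t (C₂ ·) ℓ₂ α₂)
    (hγ : ∀ σ ∈ X, σ.card = ℓ₃ → IsSection X t (C₃ ·) σ (γ σ))
    (h₄ : IsCochain X t (C₄ ·) ℓ₄ ζ₄)
    (hc₁ : IsCocycle ℓ₁ α₁) (hc₂ : IsCocycle ℓ₂ α₂) (hc₄ : IsCocycle ℓ₄ ζ₄) :
    trilinearForm ℓ₁ ℓ₂ ℓ₃ ζ₄ α₁ α₂ (cobdry X t γ) = 0 := by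
  rcases ℓ₃ with _ | d
  · rw [trilinearForm_congr hX (by omega) (EqInDegree.refl α₁) (EqInDegree.refl α₂)
      (eqInDegree_zero_cobdry_zero hne γ)]
    simp only [trilinearForm, cup_zero, zero_cup, diagSum_zero]
  · rw [trilinearForm, show ℓ₁ + ℓ₂ + (d + 1) = ℓ₁ + ℓ₂ + d + 1 by omega]
    exact diagSum_cup_eq_zero_of_eqInDegree_cobdry hX horth (by omega) h₁ h₂ hγ h₄ hc₄
      (cobdry_cup_of_isCocycle_left hX (hc₁.cup hX hc₂) rfl γ).symm

end TrilinearForm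

end Cochains

end SheafCup

open SheafCup in
theorem targeted_trilinear_form_on_cohomology_general
    {V : Type*} [Fintype V] [LinearOrder V]
    {K : Type*} [Field K] [CharP K 2]
    (X : Set (Finset V)) [DecidablePred (· ∈ X)] (t : ℕ)
    (hne : ∀ σ ∈ X, σ.Nonempty)
    (hdown : ∀ σ ∈ X, ∀ σ' : Finset V, σ' ⊆ σ → σ'.Nonempty → σ' ∈ X)
    (C₁ C₂ C₃ C₄ : (σ' : Finset V) → Submodule K (Up X σ' t → K))
    (ℓ₁ ℓ₂ ℓ₃ ℓ₄ : ℕ) (hℓ : ℓ₁ + ℓ₂ + ℓ₃ + ℓ₄ = t)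
    -- quadruple products of the local codes sum to zero
    (horth : ∀ σ ∈ X, σ.card = t →
      ∀ c₁ ∈ C₁ σ, ∀ c₂ ∈ C₂ σ, ∀ c₃ ∈ C₃ σ, ∀ c₄ ∈ C₄ σ,
        ∑ τ : Up X σ t, c₁ τ * c₂ τ * c₃ τ * c₄ τ = 0)
    -- a fixed cocycle ζ₄ ∈ ker δ^{ℓ₄}
    (ζ₄ : (σ : Finset V) → Up X σ t → K)
    (hζ₄ : IsCochain X t (fun σ' => (C₄ σ' : Set (Up X σ' t → K))) ℓ₄ ζ₄)
    (hζ₄c : ∀ ρ ∈ X, ρ.card = ℓ₄ + 2 → ∀ τ : Up X ρ t, cobdry X t ζ₄ ρ τ = 0)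
    -- cocycles ζᵢ ∈ ker δ^{ℓᵢ}, i = 1,2,3
    (ζ₁ ζ₂ ζ₃ : (σ : Finset V) → Up X σ t → K)
    (hζ₁ : IsCochain X t (fun σ' => (C₁ σ' : Set (Up X σ' t → K))) ℓ₁ ζ₁)
    (hζ₂ : IsCochain X t (fun σ' => (C₂ σ' : Set (Up X σ' t → K))) ℓ₂ ζ₂)
    (hζ₃ : IsCochain X t (fun σ' => (C₃ σ' : Set (Up X σ' t → K))) ℓ₃ ζ₃)
    (hζ₁c : ∀ ρ ∈ X, ρ.card = ℓ₁ + 2 → ∀ τ : Up X ρ t, cobdry X t ζ₁ ρ τ = 0)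
    (hζ₂c : ∀ ρ ∈ X, ρ.card = ℓ₂ + 2 → ∀ τ : Up X ρ t, cobdry X t ζ₂ ρ τ = 0)
    (hζ₃c : ∀ ρ ∈ X, ρ.card = ℓ₃ + 2 → ∀ τ : Up X ρ t, cobdry X t ζ₃ ρ τ = 0)
    -- coboundaries bᵢ = δγᵢ ∈ im δ^{ℓᵢ−1}, i = 1,2,3
    (γ₁ γ₂ γ₃ : (σ : Finset V) → Up X σ t → K)
    (hγ₁ : ∀ σ ∈ X, σ.card = ℓ₁ →
      IsSection X t (fun σ' => (C₁ σ' : Set (Up X σ' t → K))) σ (γ₁ σ))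
    (hγ₂ : ∀ σ ∈ X, σ.card = ℓ₂ →
      IsSection X t (fun σ' => (C₂ σ' : Set (Up X σ' t → K))) σ (γ₂ σ))
    (hγ₃ : ∀ σ ∈ X, σ.card = ℓ₃ →
      IsSection X t (fun σ' => (C₃ σ' : Set (Up X σ' t → K))) σ (γ₃ σ)) :
    ∑ τ : {τ : Finset V // τ ∈ X ∧ τ.card = t + 1},
      cup X t (ℓ₁ + ℓ₂ + ℓ₃)
        (cup X t (ℓ₁ + ℓ₂)
          (cup X t ℓ₁ (ζ₁ + cobdry X t γ₁) (ζ₂ + cobdry X t γ₂))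
          (ζ₃ + cobdry X t γ₃))
        ζ₄ τ.1 ⟨τ.1, τ.2.1, subset_rfl, τ.2.2⟩ =
    ∑ τ : {τ : Finset V // τ ∈ X ∧ τ.card = t + 1},
      cup X t (ℓ₁ + ℓ₂ + ℓ₃) (cup X t (ℓ₁ + ℓ₂) (cup X t ℓ₁ ζ₁ ζ₂) ζ₃)
        ζ₄ τ.1 ⟨τ.1, τ.2.1, subset_rfl, τ.2.2⟩ := by
  have hs₂ := hζ₂.add (isCochain_cobdry hγ₂)
  have hs₃ := hζ₃.add (isCochain_cobdry hγ₃)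
  have hc₂ := IsCocycle.add hζ₂c (isCocycle_cobdry hne hdown γ₂ ℓ₂)
  have hc₃ := IsCocycle.add hζ₃c (isCocycle_cobdry hne hdown γ₃ ℓ₃)
  change trilinearForm ℓ₁ ℓ₂ ℓ₃ ζ₄
      (ζ₁ + cobdry X t γ₁) (ζ₂ + cobdry X t γ₂) (ζ₃ + cobdry X t γ₃) =
    trilinearForm ℓ₁ ℓ₂ ℓ₃ ζ₄ ζ₁ ζ₂ ζ₃
  rw [trilinearForm_add_first,
    trilinearForm_cobdry_first hne hdown horth hℓ hγ₁ hs₂ hs₃ hζ₄ hc₂ hc₃ hζ₄c, add_zero,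
    trilinearForm_add_second,
    trilinearForm_cobdry_second hne hdown horth hℓ hζ₁ hγ₂ hs₃ hζ₄ hζ₁c hc₃ hζ₄c, add_zero,
    trilinearForm_add_third,
    trilinearForm_cobdry_third hne hdown horth hℓ hζ₁ hζ₂ hγ₃ hζ₄ hζ₁c hζ₂c hζ₄c, add_zero]

open SheafCup in
/-- Four local code families whose entrywise quadruple products sum to
zero over every `(t−1)`-cell, with `ℓ₁+ℓ₂+ℓ₃+ℓ₄ = t`: for a fixed cocycle `ζ₄`, the
trilinear form `f_{ζ₄}(α₁,α₂,α₃) = Σ_{τ ∈ X(t)} (((α₁∪α₂)∪α₃)∪ζ₄)(τ)(τ)` is invariant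
under changing cocycles by coboundaries. -/
theorem targeted_trilinear_form_on_cohomology
    {V : Type*} [Fintype V] [LinearOrder V]
    {K : Type*} [Field K] [Fintype K] [CharP K 2]
    (X : Set (Finset V)) [DecidablePred (· ∈ X)] (t : ℕ)
    (hne : ∀ σ ∈ X, σ.Nonempty)
    (hdown : ∀ σ ∈ X, ∀ σ' : Finset V, σ' ⊆ σ → σ'.Nonempty → σ' ∈ X)
    (hpure : ∀ σ ∈ X, ∃ τ ∈ X, σ ⊆ τ ∧ τ.card = t + 1)
    (C₁ C₂ C₃ C₄ : (σ' : Finset V) → Submodule K (Up X σ' t → K))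
    (ℓ₁ ℓ₂ ℓ₃ ℓ₄ : ℕ) (hℓ : ℓ₁ + ℓ₂ + ℓ₃ + ℓ₄ = t)
    -- quadruple products of the local codes sum to zero
    (horth : ∀ σ ∈ X, σ.card = t →
      ∀ c₁ ∈ C₁ σ, ∀ c₂ ∈ C₂ σ, ∀ c₃ ∈ C₃ σ, ∀ c₄ ∈ C₄ σ,
        ∑ τ : Up X σ t, c₁ τ * c₂ τ * c₃ τ * c₄ τ = 0)
    -- a fixed cocycle ζ₄ ∈ ker δ^{ℓ₄}
    (ζ₄ : (σ : Finset V) → Up X σ t → K)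
    (hζ₄ : IsCochain X t (fun σ' => (C₄ σ' : Set (Up X σ' t → K))) ℓ₄ ζ₄)
    (hζ₄c : ∀ ρ ∈ X, ρ.card = ℓ₄ + 2 → ∀ τ : Up X ρ t, cobdry X t ζ₄ ρ τ = 0)
    -- cocycles ζᵢ ∈ ker δ^{ℓᵢ}, i = 1,2,3
    (ζ₁ ζ₂ ζ₃ : (σ : Finset V) → Up X σ t → K)
    (hζ₁ : IsCochain X t (fun σ' => (C₁ σ' : Set (Up X σ' t → K))) ℓ₁ ζ₁)
    (hζ₂ : IsCochain X t (fun σ' => (C₂ σ' : Set (Up X σ' t → K))) ℓ₂ ζ₂)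
    (hζ₃ : IsCochain X t (fun σ' => (C₃ σ' : Set (Up X σ' t → K))) ℓ₃ ζ₃)
    (hζ₁c : ∀ ρ ∈ X, ρ.card = ℓ₁ + 2 → ∀ τ : Up X ρ t, cobdry X t ζ₁ ρ τ = 0)
    (hζ₂c : ∀ ρ ∈ X, ρ.card = ℓ₂ + 2 → ∀ τ : Up X ρ t, cobdry X t ζ₂ ρ τ = 0)
    (hζ₃c : ∀ ρ ∈ X, ρ.card = ℓ₃ + 2 → ∀ τ : Up X ρ t, cobdry X t ζ₃ ρ τ = 0)
    -- coboundaries bᵢ = δγᵢ ∈ im δ^{ℓᵢ−1}, i = 1,2,3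
    (γ₁ γ₂ γ₃ : (σ : Finset V) → Up X σ t → K)
    (hγ₁ : ∀ σ ∈ X, σ.card = ℓ₁ →
      IsSection X t (fun σ' => (C₁ σ' : Set (Up X σ' t → K))) σ (γ₁ σ))
    (hγ₂ : ∀ σ ∈ X, σ.card = ℓ₂ →
      IsSection X t (fun σ' => (C₂ σ' : Set (Up X σ' t → K))) σ (γ₂ σ))
    (hγ₃ : ∀ σ ∈ X, σ.card = ℓ₃ →
      IsSection X t (fun σ' => (C₃ σ' : Set (Up X σ' t → K))) σ (γ₃ σ)) :
    ∑ τ : {τ : Finset V // τ ∈ X ∧ τ.card = t + 1},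
      cup X t (ℓ₁ + ℓ₂ + ℓ₃)
        (cup X t (ℓ₁ + ℓ₂)
          (cup X t ℓ₁ (ζ₁ + cobdry X t γ₁) (ζ₂ + cobdry X t γ₂))
          (ζ₃ + cobdry X t γ₃))
        ζ₄ τ.1 ⟨τ.1, τ.2.1, subset_rfl, τ.2.2⟩ =
    ∑ τ : {τ : Finset V // τ ∈ X ∧ τ.card = t + 1},
      cup X t (ℓ₁ + ℓ₂ + ℓ₃) (cup X t (ℓ₁ + ℓ₂) (cup X t ℓ₁ ζ₁ ζ₂) ζ₃)
        ζ₄ τ.1 ⟨τ.1, τ.2.1, subset_rfl, τ.2.2⟩ :=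
  targeted_trilinear_form_on_cohomology_general X t hne hdown C₁ C₂ C₃ C₄ ℓ₁ ℓ₂ ℓ₃ ℓ₄ hℓ horth ζ₄
    hζ₄ hζ₄c ζ₁ ζ₂ ζ₃ hζ₁ hζ₂ hζ₃ hζ₁c hζ₂c hζ₃c γ₁ γ₂ γ₃ hγ₁ hγ₂ hγ₃
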